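/- Let $d, M \ge 0$ and let $\lambda_0 \in \mathbb{R}$ satisfy $|\lambda_0| \le 1/(8dM)$. Define $\lambda_k = \lambda_{k-1} + M\lambda_{k-1}^2$ for $k = 1, \ldots, d$. Then for every $k = 1, \ldots, d$ we have $|\lambda_k| \le 1/(6dM)$ and $\lambda_k \le \lambda_0 + 2kM\lambda_0^2$. -/

import Mathlib

/-! While `λ` stays within `5/4 |λ₀|` of the origin, each step adds at most `2Mλ₀²`, so after
`k ≤ d` steps `λ₀ ≤ λ_k ≤ λ₀ + 2kMλ₀²`; and since `2dM|λ₀| ≤ 1/4`, the accumulated drift is at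
most `|λ₀|/4`, which keeps `λ` inside that window. -/

lemma abs_le_of_le_add_mul_sq {x y t M : ℝ} (hsmall : 8 * t * M * |x| ≤ 1) (hlo : x ≤ y)
    (hhi : y ≤ x + 2 * t * M * x ^ 2) : |y| ≤ 5 / 4 * |x| := by
  have hdrift : 2 * t * M * x ^ 2 ≤ |x| / 4 := by
    have h : 2 * t * M * x ^ 2 = 2 * t * M * |x| * |x| := by rw [← sq_abs]; ring
    rw [h]
    nlinarith [abs_nonneg x]
  rw [abs_le]
  constructor <;> linarith [neg_abs_le x, le_abs_self x, abs_nonneg x]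

lemma sq_le_two_mul_sq_of_abs_le {x y : ℝ} (h : |y| ≤ 5 / 4 * |x|) : y ^ 2 ≤ 2 * x ^ 2 := by
  rw [← sq_abs y, ← sq_abs x]
  nlinarith [abs_nonneg y]

theorem le_add_mul_sq_of_quadratic_recursion {d : ℕ} {M : ℝ} (hM : 0 ≤ M) {lam : ℕ → ℝ}
    (hsmall : 8 * d * M * |lam 0| ≤ 1)
    (hrec : ∀ k < d, lam (k + 1) = lam k + M * lam k ^ 2) :
    ∀ k ≤ d, lam 0 ≤ lam k ∧ lam k ≤ lam 0 + 2 * k * M * lam 0 ^ 2 := by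
  intro k
  induction k with
  | zero => intro _; simp
  | succ k ih =>
    intro hk
    obtain ⟨hlo, hhi⟩ := ih (by omega)
    have hkd : (k : ℝ) ≤ d := by exact_mod_cast (by omega : k ≤ d)
    have hwindow : |lam k| ≤ 5 / 4 * |lam 0| :=
      abs_le_of_le_add_mul_sq (le_trans (by gcongr) hsmall) hlo hhi
    have hstep : M * lam k ^ 2 ≤ 2 * M * lam 0 ^ 2 := by
      nlinarith [mul_le_mul_of_nonneg_left (sq_le_two_mul_sq_of_abs_le hwindow) hM]
    rw [hrec k (by omega)]
    push_cast
    constructor <;> nlinarith [mul_nonneg hM (sq_nonneg (lam k))]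

theorem stmt_1_general (d : ℕ) (M : ℝ) (hM : 0 < M) (lam : ℕ → ℝ)
    (h0 : |lam 0| ≤ 1 / (8 * d * M))
    (hrec : ∀ k, 1 ≤ k → k ≤ d → lam k = lam (k - 1) + M * lam (k - 1) ^ 2) :
    ∀ k, 1 ≤ k → k ≤ d →
      |lam k| ≤ 1 / (6 * d * M) ∧ lam k ≤ lam 0 + 2 * k * M * lam 0 ^ 2 := by
  intro k _ hk
  have hsmall : 8 * d * M * |lam 0| ≤ 1 := by
    calc 8 * d * M * |lam 0| ≤ 8 * d * M * (1 / (8 * d * M)) := by gcongr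
      _ ≤ 1 := by rw [one_div]; exact mul_inv_le_one
  obtain ⟨hlo, hhi⟩ := le_add_mul_sq_of_quadratic_recursion hM.le hsmall
    (fun j hj ↦ by simpa using hrec (j + 1) (by omega) hj) k hk
  have hkd : (k : ℝ) ≤ d := by exact_mod_cast hk
  refine ⟨?_, hhi⟩
  calc |lam k| ≤ 5 / 4 * |lam 0| :=
        abs_le_of_le_add_mul_sq (le_trans (by gcongr) hsmall) hlo hhi
    _ ≤ 5 / 4 * (1 / (8 * d * M)) := by gcongr
    _ = 15 / 16 * (1 / (6 * d * M)) := by ring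
    _ ≤ 1 / (6 * d * M) := by
        have : 0 ≤ 1 / (6 * d * M) := by positivity
        linarith

theorem stmt_1 (d : ℕ) (hd : 1 ≤ d) (M : ℝ) (hM : 0 < M) (lam : ℕ → ℝ)
    (h0 : |lam 0| ≤ 1 / (8 * d * M))
    (hrec : ∀ k, 1 ≤ k → k ≤ d → lam k = lam (k - 1) + M * lam (k - 1) ^ 2) :
    ∀ k, 1 ≤ k → k ≤ d →
      |lam k| ≤ 1 / (6 * d * M) ∧ lam k ≤ lam 0 + 2 * k * M * lam 0 ^ 2 :=
  stmt_1_general d M hM lam h0 hrec
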